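/- Five-point conic: Given any five distinct points, each three of which are noncollinear, there exists a conic containing all five points; moreover any two conics containing these five points are equal as sets of points. -/

import Mathlib

open Configuration

universe u
variable (P L : Type u) [Membership P L]

/-- Three points are collinear if some line passes through all three. -/
def Col (A B C : P) : Prop := ∃ l : L, A ∈ l ∧ B ∈ l ∧ C ∈ l

/-- Every line of `L` is incident with at least `n` distinct points. -/
def LinesHaveAtLeast (n : ℕ) : Prop :=
  ∀ l : L, ∃ s : Finset P, n ≤ s.card ∧ ∀ X ∈ s, X ∈ l

/-- An object of the plane: the range of a line or the pencil of a point. -/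
inductive Obj (P L : Type u) where
  | range : L → Obj P L
  | pencil : P → Obj P L

/-- The carrier of an object: the points on the line, resp. the lines through
the point. -/
abbrev Obj.Carrier {P L : Type u} [Membership P L] : Obj P L → Type u
  | .range l => {X : P // X ∈ l}
  | .pencil U => {k : L // U ∈ k}

/-- `f` is the perspectivity from the range of `l` to the range of `m` with
center `O`, a point outside both `l` and `m` : each point `X` of `l` is mapped
to the point `(OX)·m`, i.e. `O`, `X` and `f X` are collinear. -/
def IsRangePersp (l m : L) (f : {X : P // X ∈ l} → {Y : P // Y ∈ m}) : Prop :=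
  ∃ O : P, O ∉ l ∧ O ∉ m ∧
    ∀ X : {X : P // X ∈ l}, ∃ k : L, O ∈ k ∧ (X : P) ∈ k ∧ ((f X : P)) ∈ k

/-- `f` is the elementary map from the pencil of `U` to the range of a line `l`
not through `U` : each line `k` through `U` is sent to the point `k·l`. -/
def IsElemMap (U : P) (l : L) (f : {k : L // U ∈ k} → {X : P // X ∈ l}) : Prop :=
  U ∉ l ∧ ∀ k : {k : L // U ∈ k}, ((f k : P)) ∈ (k : L)

/-- `f` is the elementary map from the range of a line `l` to the pencil of a
point `U` outside `l` : each point `X` of `l` is sent to the line `UX`. -/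
def IsElemInv (U : P) (l : L) (f : {X : P // X ∈ l} → {k : L // U ∈ k}) : Prop :=
  U ∉ l ∧ ∀ X : {X : P // X ∈ l}, (X : P) ∈ ((f X : L))

/-- A projectivity (between ranges or pencils) : a composite of finitely many
perspectivities and elementary maps. -/
inductive IsProj : (a b : Obj P L) → (a.Carrier → b.Carrier) → Prop where
  | persp {l m : L} {f : {X : P // X ∈ l} → {Y : P // Y ∈ m}} :
      IsRangePersp P L l m f → IsProj (.range l) (.range m) f
  | elem {U : P} {l : L} {f : {k : L // U ∈ k} → {X : P // X ∈ l}} :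
      IsElemMap P L U l f → IsProj (.pencil U) (.range l) f
  | elemInv {U : P} {l : L} {f : {X : P // X ∈ l} → {k : L // U ∈ k}} :
      IsElemInv P L U l f → IsProj (.range l) (.pencil U) f
  | comp {a b c : Obj P L} {f : a.Carrier → b.Carrier} {g : b.Carrier → c.Carrier} :
      IsProj a b f → IsProj b c g → IsProj a c (g ∘ f)

/-- Axiom T: every projectivity of a range or a pencil onto itself having three
distinct fixed elements is the identity. -/
def AxiomT : Prop :=
  ∀ (a : Obj P L) (f : a.Carrier → a.Carrier), IsProj P L a a f →
    (∃ x y z : a.Carrier, x ≠ y ∧ x ≠ z ∧ y ≠ z ∧ f x = x ∧ f y = y ∧ f z = z) →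
    ∀ w, f w = w

/-- The Steiner conic `κ(π;U,V)` defined by a projectivity `π : U* → V*` :
the locus of points `l·π(l)` for `l` a line through `U`. -/
def conicSet (U V : P) (π : {k : L // U ∈ k} → {k : L // V ∈ k}) : Set P :=
  {X : P | ∃ k : {k : L // U ∈ k}, X ∈ (k : L) ∧ X ∈ ((π k : L))}

/-- A conic: the Steiner conic of some nonperspective projectivity between the
pencils of two distinct points. -/
def IsConic (κ : Set P) : Prop :=
  ∃ (U V : P) (π : {k : L // U ∈ k} → {k : L // V ∈ k}),
    U ≠ V ∧ IsProj P L (.pencil U) (.pencil V) π ∧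
    (∀ k : {k : L // U ∈ k}, ((π k : L)) ≠ (k : L)) ∧
    κ = conicSet P L U V π

/-- A line `t` is tangent to `κ` at `Q` if `Q` is on `κ` and on `t`, and is the
only point of `κ` incident with `t`. -/
def IsTangent (κ : Set P) (t : L) (Q : P) : Prop :=
  Q ∈ κ ∧ Q ∈ t ∧ ∀ X ∈ κ, X ∈ t → X = Q

/-- A line is a secant of `κ` if it passes through two distinct points of `κ`. -/
def IsSecant (κ : Set P) (s : L) : Prop :=
  ∃ X Y : P, X ≠ Y ∧ X ∈ κ ∧ Y ∈ κ ∧ X ∈ s ∧ Y ∈ s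

/-- Axiom P: the tangents to a conic at any three distinct points of the conic
are nonconcurrent. -/
def AxiomP : Prop :=
  ∀ κ : Set P, IsConic P L κ →
    ∀ X Y Z : P, X ∈ κ → Y ∈ κ → Z ∈ κ → X ≠ Y → X ≠ Z → Y ≠ Z →
      ∀ tx ty tz : L, IsTangent P L κ tx X → IsTangent P L κ ty Y → IsTangent P L κ tz Z →
        ¬ ∃ W : P, W ∈ tx ∧ W ∈ ty ∧ W ∈ tz

/-!
Existence: with `O = AE·BD`, the composite `A* → CD → CE → B*` of an elementary map, the
perspectivity with center `O` and an inverse elementary map is a nonperspective projectivity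
sending `AC, AD, AE` to `BC, BD, BE`; its conic passes through all five points.

Uniqueness: by Axiom T a projectivity `A* → B*` is determined by the images of `AC, AD, AE`,
so it suffices that any two points of a conic can serve as its base points. To replace the base
point `V` of `κ(π;U,V)` by another point `B` of it, let `O` be the pole of `UV` (the meet of the
tangents at `U` and `V`) and `H` the harmonic conjugation on `UV` with respect to `U`, `V`,
which is a projectivity because Axiom T makes harmonic conjugates unique. For `X` on the conic,
`p = UX·VB` and `q = UB·VX` are collinear with `O`: the map `UX → VX`, `Y ↦ π⁻¹(VY)·VX`, fixes
`X`, so it is a perspectivity, and its center lies on both tangents. The quadrangle `X B p q`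
then shows `BX·UV = H(Op·UV)`, so `k ↦ B·H(O(k·VB)·UV)` is a projectivity `U* → B*` with the
same conic.
-/

section Basic

variable {P L}

theorem exists_mem_ne_ne (h3 : LinesHaveAtLeast P L 3) (l : L) (A B : P) :
    ∃ X ∈ l, X ≠ A ∧ X ≠ B := by
  classical
  obtain ⟨s, hs, hsl⟩ := h3 l
  by_contra! h
  have : s ⊆ {A, B} := fun X hX => by
    by_cases hXA : X = A
    · simp [hXA]
    · simp [h X (hsl X hX) hXA]
  have := (Finset.card_le_card this).trans Finset.card_le_two
  omega

theorem LinesHaveAtLeast.mono {m n : ℕ} (h : LinesHaveAtLeast P L n) (hmn : m ≤ n) :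
    LinesHaveAtLeast P L m :=
  fun l => (h l).imp fun _ hs => ⟨hmn.trans hs.1, hs.2⟩

theorem Col.rotate {A B C : P} : Col P L A B C → Col P L B C A :=
  fun ⟨l, hA, hB, hC⟩ => ⟨l, hB, hC, hA⟩

theorem Col.swap {A B C : P} : Col P L A B C → Col P L B A C :=
  fun ⟨l, hA, hB, hC⟩ => ⟨l, hB, hA, hC⟩

abbrev Pencil (L : Type u) [Membership P L] (U : P) : Type u := {k : L // U ∈ k}

abbrev Pts (l : L) : Type u := {X : P // X ∈ l}

def IsPersp (O : P) (l m : L) (f : Pts l → Pts m) : Prop :=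
  O ∉ l ∧ O ∉ m ∧ ∀ X : Pts l, Col P L O X (f X)

theorem IsPersp.isProj {O : P} {l m : L} {f : Pts l → Pts m} (hf : IsPersp O l m f) :
    IsProj P L (.range l) (.range m) f :=
  .persp ⟨O, hf⟩

end Basic

section Incidence

variable {P L}

theorem point_eq_of_mem [Nondegenerate P L] {A B : P} {l m : L} (hlm : l ≠ m) (hAl : A ∈ l)
    (hAm : A ∈ m) (hBl : B ∈ l) (hBm : B ∈ m) : A = B :=
  (Nondegenerate.eq_or_eq hAl hBl hAm hBm).resolve_right hlm

theorem line_eq_of_mem [Nondegenerate P L] {A B : P} {l m : L} (hAB : A ≠ B) (hAl : A ∈ l)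
    (hBl : B ∈ l) (hAm : A ∈ m) (hBm : B ∈ m) : l = m :=
  (Nondegenerate.eq_or_eq hAl hBl hAm hBm).resolve_left hAB

theorem exists_line_mem [HasLines P L] {A B : P} (h : A ≠ B) : ∃ l : L, A ∈ l ∧ B ∈ l :=
  ⟨_, HasLines.mkLine_ax h⟩

theorem exists_point_mem [HasPoints P L] {l m : L} (h : l ≠ m) : ∃ X : P, X ∈ l ∧ X ∈ m :=
  ⟨_, HasPoints.mkPoint_ax h⟩

theorem Col.mem [Nondegenerate P L] {A B C : P} {n : L} (h : Col P L A B C) (hAB : A ≠ B)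
    (hA : A ∈ n) (hB : B ∈ n) : C ∈ n := by
  obtain ⟨l, hAl, hBl, hCl⟩ := h
  rwa [line_eq_of_mem hAB hAl hBl hA hB] at hCl

theorem col_of_ne [HasLines P L] {A B : P} (h : A ≠ B) : Col P L A B B :=
  let ⟨l, hA, hB⟩ := exists_line_mem (L := L) h
  ⟨l, hA, hB, hB⟩

end Incidence

section Maps

variable {P L} [ProjectivePlane P L]

theorem exists_isPersp {O : P} {l m : L} (hOl : O ∉ l) (hOm : O ∉ m) :
    ∃ f : Pts l → Pts m, IsPersp O l m f := by
  have hOX (X : Pts l) : O ≠ X := (ne_of_mem_of_not_mem X.2 hOl).symm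
  have hline (X : Pts l) : (HasLines.mkLine (hOX X) : L) ≠ m :=
    ne_of_mem_of_not_mem' (HasLines.mkLine_ax (hOX X)).1 hOm
  exact ⟨fun X => ⟨HasPoints.mkPoint (hline X), (HasPoints.mkPoint_ax (hline X)).2⟩, hOl, hOm,
    fun X => ⟨_, (HasLines.mkLine_ax (hOX X)).1, (HasLines.mkLine_ax (hOX X)).2,
      (HasPoints.mkPoint_ax (hline X)).1⟩⟩

theorem IsPersp.apply_eq {O : P} {l m : L} {f : Pts l → Pts m} (hf : IsPersp O l m f)
    {X : Pts l} {Y : P} (hOXY : Col P L O X Y) (hY : Y ∈ m) : (f X : P) = Y := by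
  obtain ⟨n, hOn, hXn, hYn⟩ := hOXY
  have hOX : O ≠ X := (ne_of_mem_of_not_mem X.2 hf.1).symm
  exact point_eq_of_mem (ne_of_mem_of_not_mem' hOn hf.2.1) ((hf.2.2 X).mem hOX hOn hXn)
    (f X).2 hYn hY

theorem IsPersp.apply_eq_self {O : P} {l m : L} {f : Pts l → Pts m} (hf : IsPersp O l m f)
    {X : P} (hXl : X ∈ l) (hXm : X ∈ m) : f ⟨X, hXl⟩ = ⟨X, hXm⟩ :=
  Subtype.ext (hf.apply_eq (col_of_ne (ne_of_mem_of_not_mem hXl hf.1).symm) hXm)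

theorem IsElemMap.apply_eq {U : P} {l : L} {f : Pencil L U → Pts l} (hf : IsElemMap P L U l f)
    {k : Pencil L U} {Y : P} (hYk : Y ∈ (k : L)) (hYl : Y ∈ l) : (f k : P) = Y :=
  point_eq_of_mem (ne_of_mem_of_not_mem' k.2 hf.1) (hf.2 k) (f k).2 hYk hYl

theorem IsElemInv.apply_eq {U : P} {l : L} {f : Pts l → Pencil L U} (hf : IsElemInv P L U l f)
    {X : Pts l} {n : L} (hUn : U ∈ n) (hXn : (X : P) ∈ n) : (f X : L) = n :=
  line_eq_of_mem (ne_of_mem_of_not_mem X.2 hf.1).symm (f X).2 (hf.2 X) hUn hXn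

theorem exists_isElemMap {U : P} {l : L} (hU : U ∉ l) :
    ∃ f : Pencil L U → Pts l, IsElemMap P L U l f :=
  ⟨fun k => ⟨HasPoints.mkPoint (ne_of_mem_of_not_mem' k.2 hU), (HasPoints.mkPoint_ax _).2⟩, hU,
    fun _ => (HasPoints.mkPoint_ax _).1⟩

theorem exists_isElemInv {U : P} {l : L} (hU : U ∉ l) :
    ∃ f : Pts l → Pencil L U, IsElemInv P L U l f :=
  ⟨fun X => ⟨HasLines.mkLine (ne_of_mem_of_not_mem X.2 hU).symm, (HasLines.mkLine_ax _).1⟩, hU,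
    fun _ => (HasLines.mkLine_ax _).2⟩

end Maps

section Projectivities

variable {P L} [ProjectivePlane P L]

theorem IsPersp.exists_inverse {O : P} {l m : L} {f : Pts l → Pts m} (hf : IsPersp O l m f) :
    ∃ g : Pts m → Pts l, IsPersp O m l g ∧ (∀ X, g (f X) = X) ∧ ∀ Y, f (g Y) = Y := by
  obtain ⟨g, hg⟩ := exists_isPersp hf.2.1 hf.1
  exact ⟨g, hg, fun X => Subtype.ext (hg.apply_eq (hf.2.2 X).swap.rotate X.2),
    fun Y => Subtype.ext (hf.apply_eq (hg.2.2 Y).swap.rotate Y.2)⟩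

theorem IsProj.exists_inverse {a b : Obj P L} {f : a.Carrier → b.Carrier}
    (hf : IsProj P L a b f) :
    ∃ g : b.Carrier → a.Carrier, IsProj P L b a g ∧ (∀ x, g (f x) = x) ∧ ∀ y, f (g y) = y := by
  induction hf with
  | persp hf =>
    obtain ⟨O, hf⟩ := hf
    obtain ⟨g, hg, hgf, hfg⟩ := IsPersp.exists_inverse hf
    exact ⟨g, hg.isProj, hgf, hfg⟩
  | @elem U l f hf =>
    obtain ⟨g, hg⟩ := exists_isElemInv hf.1
    exact ⟨g, .elemInv hg, fun k => Subtype.ext (hg.apply_eq k.2 (hf.2 k)),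
      fun X => Subtype.ext (hf.apply_eq (hg.2 X) X.2)⟩
  | @elemInv U l f hf =>
    obtain ⟨g, hg⟩ := exists_isElemMap hf.1
    exact ⟨g, .elem hg, fun X => Subtype.ext (hg.apply_eq (hf.2 X) X.2),
      fun k => Subtype.ext (hf.apply_eq k.2 (hg.2 k))⟩
  | comp _ _ ihf ihg =>
    obtain ⟨f', hf', hf'f, hff'⟩ := ihf
    obtain ⟨g', hg', hg'g, hgg'⟩ := ihg
    exact ⟨f' ∘ g', hg'.comp hf', fun x => by simp [hg'g, hf'f], fun y => by simp [hff', hgg']⟩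

theorem IsProj.injective {a b : Obj P L} {f : a.Carrier → b.Carrier} (hf : IsProj P L a b f) :
    Function.Injective f :=
  let ⟨_, _, hgf, _⟩ := hf.exists_inverse
  Function.LeftInverse.injective hgf

theorem IsProj.eq_of_eq_on_three (hT : AxiomT P L) {a b : Obj P L}
    {f g : a.Carrier → b.Carrier} (hf : IsProj P L a b f) (hg : IsProj P L a b g)
    {x y z : a.Carrier} (hxy : x ≠ y) (hxz : x ≠ z) (hyz : y ≠ z)
    (hx : f x = g x) (hy : f y = g y) (hz : f z = g z) : f = g := by
  obtain ⟨g', hg', hg'g, hgg'⟩ := hg.exists_inverse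
  have hid := hT a (g' ∘ f) (hf.comp hg') ⟨x, y, z, hxy, hxz, hyz, by simp [hx, hg'g],
    by simp [hy, hg'g], by simp [hz, hg'g]⟩
  funext w
  rw [← hgg' (f w), ← Function.comp_apply (f := g'), hid]

end Projectivities

section Perspectivities

variable {P L} [ProjectivePlane P L]

theorem exists_not_mem_col_col {l m : L} {X Y X' Y' : P} (hXl : X ∈ l) (hYl : Y ∈ l)
    (hXY : X ≠ Y) (hX'm : X' ∈ m) (hY'm : Y' ∈ m) (hX'Y' : X' ≠ Y') (hXm : X ∉ m) (hYm : Y ∉ m)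
    (hX'l : X' ∉ l) (hY'l : Y' ∉ l) :
    ∃ O : P, O ∉ l ∧ O ∉ m ∧ Col P L O X X' ∧ Col P L O Y Y' := by
  obtain ⟨a, hXa, hX'a⟩ := exists_line_mem (L := L) (ne_of_mem_of_not_mem hXl hX'l)
  obtain ⟨b, hYb, hY'b⟩ := exists_line_mem (L := L) (ne_of_mem_of_not_mem hYl hY'l)
  have hab : a ≠ b := fun h => hX'l (line_eq_of_mem hXY hXa (h ▸ hYb) hXl hYl ▸ hX'a)
  obtain ⟨O, hOa, hOb⟩ := exists_point_mem (P := P) hab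
  have hO {n : L} {Z W : P} (hZa : Z ∈ a) (hWb : W ∈ b) (hZn : Z ∈ n) (hWn : W ∈ n)
      (hZW : Z ≠ W) (han : a ≠ n) (hbn : b ≠ n) : O ∉ n := fun h =>
    hZW ((point_eq_of_mem han hOa h hZa hZn).symm.trans (point_eq_of_mem hbn hOb h hWb hWn))
  exact ⟨O, hO hXa hYb hXl hYl hXY (ne_of_mem_of_not_mem' hX'a hX'l)
      (ne_of_mem_of_not_mem' hY'b hY'l),
    hO hX'a hY'b hX'm hY'm hX'Y' (ne_of_mem_of_not_mem' hXa hXm) (ne_of_mem_of_not_mem' hYb hYm),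
    ⟨a, hOa, hXa, hX'a⟩, ⟨b, hOb, hYb, hY'b⟩⟩

theorem IsProj.exists_isPersp_of_apply_eq_self (hT : AxiomT P L) (h3 : LinesHaveAtLeast P L 3)
    {l m : L} (hlm : l ≠ m) {f : Pts l → Pts m} (hf : IsProj P L (.range l) (.range m) f)
    {E : P} (hEl : E ∈ l) (hEm : E ∈ m) (hfE : (f ⟨E, hEl⟩ : P) = E) :
    ∃ O, IsPersp O l m f := by
  obtain ⟨X, hXl, hXE, -⟩ := exists_mem_ne_ne h3 l E E
  obtain ⟨Y, hYl, hYE, hYX⟩ := exists_mem_ne_ne h3 l E X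
  have hoff {Z : P} (hZl : Z ∈ l) (hZE : Z ≠ E) : (f ⟨Z, hZl⟩ : P) ∉ l := fun hZ =>
    hZE (congrArg Subtype.val (hf.injective (Subtype.ext
      ((point_eq_of_mem hlm hZ (f _).2 hEl hEm).trans hfE.symm))))
  have hnot {Z : P} (hZl : Z ∈ l) (hZE : Z ≠ E) : Z ∉ m := fun h =>
    hZE (point_eq_of_mem hlm hZl h hEl hEm)
  have hXY : (⟨X, hXl⟩ : Pts l) ≠ ⟨Y, hYl⟩ := Subtype.coe_ne_coe.mp hYX.symm
  obtain ⟨O, hOl, hOm, hOX, hOY⟩ := exists_not_mem_col_col hXl hYl hYX.symm (f _).2 (f _).2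
    (Subtype.coe_ne_coe.mpr (hf.injective.ne hXY)) (hnot hXl hXE) (hnot hYl hYE)
    (hoff hXl hXE) (hoff hYl hYE)
  obtain ⟨g, hg⟩ := exists_isPersp hOl hOm
  have hfg : f = g := hf.eq_of_eq_on_three hT hg.isProj hXY
    (Subtype.coe_ne_coe.mp hXE) (Subtype.coe_ne_coe.mp hYE)
    (Subtype.ext (hg.apply_eq hOX (f _).2).symm) (Subtype.ext (hg.apply_eq hOY (f _).2).symm)
    ((Subtype.ext hfE).trans (hg.apply_eq_self hEl hEm).symm)
  exact ⟨O, hfg ▸ hg⟩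

end Perspectivities

section Harmonic

variable {P L}

/-- `r` is harmonic to `z` with respect to `U`, `V` on `e`: some complete quadrangle `X B p q`
has diagonal points `U = Xp·Bq` and `V = Bp·Xq`, and its sides `pq`, `XB` meet `e` in `z`, `r`. -/
def IsHarmonic (e : L) (U V z r : P) : Prop :=
  ∃ (X B p q : P) (s : L), X ∉ e ∧ B ∉ e ∧ X ≠ B ∧ X ∉ s ∧ B ∉ s ∧ s ≠ e ∧
    p ∈ s ∧ q ∈ s ∧ z ∈ s ∧ Col P L X U p ∧ Col P L B p V ∧ Col P L X V q ∧
    Col P L B q U ∧ Col P L X B r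

variable [ProjectivePlane P L]

theorem IsPersp.mem_or_col_of_apply_apply_eq {X B : P} {e s : L} {f : Pts e → Pts s}
    {g : Pts s → Pts e} (hf : IsPersp X e s f) (hg : IsPersp B s e g) {w : Pts e}
    (hw : g (f w) = w) : (w : P) ∈ s ∨ Col P L X B w := by
  by_cases hwf : (w : P) = f w
  · exact .inl (hwf ▸ (f w).2)
  · obtain ⟨n, hwn, hfwn⟩ := exists_line_mem (L := L) hwf
    have hB := hg.2.2 (f w)
    rw [hw] at hB
    exact .inr ⟨n, (hf.2.2 w).rotate.mem hwf hwn hfwn, hB.rotate.mem (Ne.symm hwf) hfwn hwn, hwn⟩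

theorem IsHarmonic.exists_proj {e : L} {U V z r : P} (hU : U ∈ e) (hV : V ∈ e) (hz : z ∈ e)
    (hr : r ∈ e) (h : IsHarmonic e U V z r) :
    ∃ ω : Pts e → Pts e, IsProj P L (.range e) (.range e) ω ∧ ω ⟨U, hU⟩ = ⟨V, hV⟩ ∧
      ω ⟨V, hV⟩ = ⟨U, hU⟩ ∧ ω ⟨z, hz⟩ = ⟨z, hz⟩ ∧ ω ⟨r, hr⟩ = ⟨r, hr⟩ ∧
      ∀ w, ω w = w → (w : P) = z ∨ (w : P) = r := by
  obtain ⟨X, B, p, q, s, hXe, hBe, hXB, hXs, hBs, hse, hp, hq, hzs, hXUp, hBpV, hXVq, hBqU,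
    n, hXn, hBn, hrn⟩ := h
  obtain ⟨f, hf⟩ := exists_isPersp hXe hXs
  obtain ⟨g, hg⟩ := exists_isPersp hBs hBe
  have hne : n ≠ e := ne_of_mem_of_not_mem' hXn hXe
  have hfU : (f ⟨U, hU⟩ : P) = p := hf.apply_eq hXUp hp
  have hfV : (f ⟨V, hV⟩ : P) = q := hf.apply_eq hXVq hq
  have hfr : (f ⟨r, hr⟩ : P) ∈ n :=
    (hf.2.2 _).mem (ne_of_mem_of_not_mem hr hXe).symm hXn hrn
  refine ⟨g ∘ f, hf.isProj.comp hg.isProj, ?_, ?_, ?_, ?_, fun w hw => ?_⟩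
  · exact Subtype.ext (hg.apply_eq (hfU ▸ hBpV) hV)
  · exact Subtype.ext (hg.apply_eq (hfV ▸ hBqU) hU)
  · rw [Function.comp_apply, hf.apply_eq_self hz hzs, hg.apply_eq_self hzs hz]
  · exact Subtype.ext (hg.apply_eq ⟨n, hBn, hfr, hrn⟩ hr)
  · rcases hf.mem_or_col_of_apply_apply_eq hg hw with hws | hXBw
    · exact .inl (point_eq_of_mem hse hws w.2 hzs hz)
    · exact .inr (point_eq_of_mem hne (hXBw.mem hXB hXn hBn) w.2 hrn hr)

theorem IsHarmonic.eq_or_eq (hT : AxiomT P L) {e : L} {U V z r r' : P} (hUV : U ≠ V)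
    (hzU : z ≠ U) (hzV : z ≠ V) (hU : U ∈ e) (hV : V ∈ e) (hz : z ∈ e) (hr : r ∈ e)
    (hr' : r' ∈ e) (h : IsHarmonic e U V z r) (h' : IsHarmonic e U V z r') : r = z ∨ r = r' := by
  obtain ⟨ω, hω, hωU, hωV, hωz, hωr, -⟩ := h.exists_proj hU hV hz hr
  obtain ⟨ω', hω', hω'U, hω'V, hω'z, -, hfix⟩ := h'.exists_proj hU hV hz hr'
  have hid := hT (.range e) (ω' ∘ ω) (hω.comp hω') ⟨⟨U, hU⟩, ⟨V, hV⟩, ⟨z, hz⟩,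
    Subtype.coe_ne_coe.mp hUV, Subtype.coe_ne_coe.mp hzU.symm, Subtype.coe_ne_coe.mp hzV.symm,
    by simp [hωU, hω'V], by simp [hωV, hω'U],
    by simp [hωz, hω'z]⟩ ⟨r, hr⟩
  rw [Function.comp_apply, hωr] at hid
  exact hfix _ hid

theorem IsHarmonic.unique (hT : AxiomT P L) {e : L} {U V z r r' : P} (hUV : U ≠ V)
    (hzU : z ≠ U) (hzV : z ≠ V) (hU : U ∈ e) (hV : V ∈ e) (hz : z ∈ e) (hr : r ∈ e)
    (hr' : r' ∈ e) (h : IsHarmonic e U V z r) (h' : IsHarmonic e U V z r') : r = r' := by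
  rcases h.eq_or_eq hT hUV hzU hzV hU hV hz hr hr' h' with hrz | hrr'
  · rcases h'.eq_or_eq hT hUV hzU hzV hU hV hz hr' hr h with hr'z | hr'r
    · exact hrz.trans hr'z.symm
    · exact hr'r.symm
  · exact hrr'

end Harmonic

section HarmonicMap

variable {P L} [ProjectivePlane P L]

theorem isHarmonic_of_isPersp {e n l m : L} {U V a b z : P} (hU : U ∈ e) (hV : V ∈ e)
    (hz : z ∈ e) (hzU : z ≠ U) (hzV : z ≠ V) (hae : a ∉ e) (hbe : b ∉ e) (hab : a ≠ b)
    (hUn : U ∈ n) (han : a ∈ n) (hbn : b ∈ n) (hVl : V ∈ l) (hal : a ∈ l) (hVm : V ∈ m)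
    (hbm : b ∈ m) (ham : a ∉ m) {f₁ : Pts e → Pts l} {f₂ : Pts l → Pts m} {f₃ : Pts m → Pts e}
    (hf₁ : IsPersp b e l f₁) (hf₂ : IsPersp U l m f₂) (hf₃ : IsPersp a m e f₃) :
    IsHarmonic e U V z (f₃ (f₂ (f₁ ⟨z, hz⟩))) := by
  set c := f₁ ⟨z, hz⟩
  set d := f₂ c
  obtain ⟨s, hbs, hzs⟩ := exists_line_mem (L := L) (ne_of_mem_of_not_mem hz hbe).symm
  have hcs : (c : P) ∈ s := (hf₁.2.2 _).mem (ne_of_mem_of_not_mem hz hbe).symm hbs hzs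
  have hcV : (c : P) ≠ V := fun h => hbe ((hf₁.2.2 _).rotate.mem (h ▸ hzV) hz (h ▸ hV))
  have hce : (c : P) ∉ e := fun h =>
    hcV (point_eq_of_mem (ne_of_mem_of_not_mem' hal hae) c.2 h hVl hV)
  have hde : (d : P) ∉ e := by
    intro h
    have hdV : (d : P) = V := point_eq_of_mem (ne_of_mem_of_not_mem' hbm hbe) d.2 h hVm hV
    exact hce ((hf₂.2.2 c).rotate.rotate.mem (hdV ▸ ne_of_mem_of_not_mem hVm hf₂.2.1)
      (hdV ▸ hV) hU)
  have hcd : (c : P) ≠ d := fun h =>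
    hcV (point_eq_of_mem (ne_of_mem_of_not_mem' hal ham) c.2 (h ▸ d.2) hVl hVm)
  refine ⟨a, d, b, c, s, hae, hde, (ne_of_mem_of_not_mem d.2 ham).symm, fun has => hzU ?_,
    fun hds => hbe ?_, ne_of_mem_of_not_mem' hbs hbe, hbs, hcs, hzs, ⟨n, han, hUn, hbn⟩,
    ⟨m, d.2, hbm, hVm⟩, ⟨l, hal, hVl, c.2⟩, (hf₂.2.2 c).rotate.swap, hf₃.2.2 d⟩
  · have hsn : s = n := line_eq_of_mem hab has hbs han hbn
    exact point_eq_of_mem (ne_of_mem_of_not_mem' han hae) (hsn ▸ hzs) hz hUn hU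
  · have hse : s = e := line_eq_of_mem hzU hzs ((hf₂.2.2 c).rotate.mem hcd hcs hds) hz hU
    exact hse ▸ hbs

theorem exists_harmonic_proj (h3 : LinesHaveAtLeast P L 3) {e : L} {U V : P} (hUV : U ≠ V)
    (hU : U ∈ e) (hV : V ∈ e) :
    ∃ H : Pts e → Pts e, IsProj P L (.range e) (.range e) H ∧ H ⟨U, hU⟩ = ⟨U, hU⟩ ∧
      H ⟨V, hV⟩ = ⟨V, hV⟩ ∧
      ∀ (z : P) (hz : z ∈ e), z ≠ U → z ≠ V → IsHarmonic e U V z (H ⟨z, hz⟩) := by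
  obtain ⟨a, hae⟩ := Nondegenerate.exists_point (P := P) e
  obtain ⟨n, hUn, han⟩ := exists_line_mem (L := L) (ne_of_mem_of_not_mem hU hae)
  obtain ⟨b, hbn, hbU, hba⟩ := exists_mem_ne_ne h3 n U a
  have hne : n ≠ e := ne_of_mem_of_not_mem' han hae
  have hbe : b ∉ e := fun h => hbU (point_eq_of_mem hne hbn h hUn hU)
  obtain ⟨l, hVl, hal⟩ := exists_line_mem (L := L) (ne_of_mem_of_not_mem hV hae)
  obtain ⟨m, hVm, hbm⟩ := exists_line_mem (L := L) (ne_of_mem_of_not_mem hV hbe)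
  have hVn : V ∉ n := fun h => hne (line_eq_of_mem hUV hUn h hU hV)
  have hUl : U ∉ l := fun h => hae (line_eq_of_mem hUV h hVl hU hV ▸ hal)
  have hUm : U ∉ m := fun h => hbe (line_eq_of_mem hUV h hVm hU hV ▸ hbm)
  have hbl : b ∉ l := fun h => hba (point_eq_of_mem (ne_of_mem_of_not_mem' hVl hVn) h hbn hal han)
  have ham : a ∉ m := fun h => hba (point_eq_of_mem (ne_of_mem_of_not_mem' hVm hVn) hbm hbn h han)
  obtain ⟨f₁, hf₁⟩ := exists_isPersp hbe hbl
  obtain ⟨f₂, hf₂⟩ := exists_isPersp hUl hUm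
  obtain ⟨f₃, hf₃⟩ := exists_isPersp ham hae
  refine ⟨f₃ ∘ f₂ ∘ f₁, (hf₁.isProj.comp hf₂.isProj).comp hf₃.isProj, ?_, ?_,
    fun z hz hzU hzV => isHarmonic_of_isPersp hU hV hz hzU hzV hae hbe hba.symm hUn han hbn hVl
      hal hVm hbm ham hf₁ hf₂ hf₃⟩
  · rw [Function.comp_apply, Function.comp_apply,
      show f₁ ⟨U, hU⟩ = ⟨a, hal⟩ from Subtype.ext (hf₁.apply_eq ⟨n, hbn, hUn, han⟩ hal),
      show f₂ ⟨a, hal⟩ = ⟨b, hbm⟩ from Subtype.ext (hf₂.apply_eq ⟨n, hUn, han, hbn⟩ hbm)]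
    exact Subtype.ext (hf₃.apply_eq ⟨n, han, hbn, hUn⟩ hU)
  · rw [Function.comp_apply, Function.comp_apply, hf₁.apply_eq_self hV hVl,
      hf₂.apply_eq_self hVl hVm, hf₃.apply_eq_self hVm hV]

end HarmonicMap

section Steiner

variable {P L}

/-- The data of the Steiner conic `κ(π;U,V)`. -/
structure IsSteiner (U V : P) (π : Pencil L U → Pencil L V) : Prop where
  ne : U ≠ V
  isProj : IsProj P L (.pencil U) (.pencil V) π
  apply_ne : ∀ k, (π k : L) ≠ k

variable {U V : P} {π : Pencil L U → Pencil L V}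

theorem isConic_iff {κ : Set P} :
    IsConic P L κ ↔ ∃ (U V : P) (π : Pencil L U → Pencil L V), IsSteiner U V π ∧
      conicSet P L U V π = κ :=
  ⟨fun ⟨U, V, π, hUV, hπ, hnp, hκ⟩ => ⟨U, V, π, ⟨hUV, hπ, hnp⟩, hκ.symm⟩,
    fun ⟨U, V, π, hπ, hκ⟩ => ⟨U, V, π, hπ.ne, hπ.isProj, hπ.apply_ne, hκ.symm⟩⟩

variable [ProjectivePlane P L]

theorem mem_apply_of_mem_conicSet {X : P} (hX : X ∈ conicSet P L U V π) (hXU : X ≠ U)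
    {k : Pencil L U} (hk : X ∈ (k : L)) : X ∈ (π k : L) := by
  obtain ⟨k₀, hXk₀, hXπk₀⟩ := hX
  rwa [Subtype.ext (line_eq_of_mem hXU.symm k₀.2 hXk₀ k.2 hk)] at hXπk₀

theorem IsSteiner.mem_of_mem_conicSet (hπ : IsSteiner U V π) {X : P}
    (hX : X ∈ conicSet P L U V π) (hXV : X ≠ V) {k : Pencil L U} (hk : X ∈ (π k : L)) :
    X ∈ (k : L) := by
  obtain ⟨k₀, hXk₀, hXπk₀⟩ := hX
  rwa [hπ.isProj.injective (Subtype.ext (line_eq_of_mem hXV.symm (π k₀).2 hXπk₀ (π k).2 hk))]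
    at hXk₀

theorem IsSteiner.eq_of_mem_conicSet (hπ : IsSteiner U V π) {X Y : P}
    (hX : X ∈ conicSet P L U V π) (hXU : X ≠ U) {k : Pencil L U} (hXk : X ∈ (k : L))
    (hYk : Y ∈ (k : L)) (hYπk : Y ∈ (π k : L)) : X = Y :=
  point_eq_of_mem (hπ.apply_ne k).symm hXk (mem_apply_of_mem_conicSet hX hXU hXk) hYk hYπk

theorem IsSteiner.not_mem_of_mem_conicSet (hπ : IsSteiner U V π) {X : P}
    (hX : X ∈ conicSet P L U V π) (hXU : X ≠ U) (hXV : X ≠ V) {e : L} (hU : U ∈ e)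
    (hV : V ∈ e) : X ∉ e :=
  fun hXe => hXV (hπ.eq_of_mem_conicSet hX hXU (k := ⟨e, hU⟩) hXe hV (π _).2)

theorem conicSet_eq_of_forall_mem {B : P} {ρ : Pencil L U → Pencil L B}
    (hπ : ∀ k, (π k : L) ≠ k) (hρ : ∀ k, (ρ k : L) ≠ k)
    (h : ∀ (k : Pencil L U) (X : P), X ∈ (k : L) → X ∈ (π k : L) → X ∈ (ρ k : L)) :
    conicSet P L U B ρ = conicSet P L U V π := by
  ext X
  refine ⟨fun ⟨k, hXk, hXρk⟩ => ⟨k, hXk, ?_⟩, fun ⟨k, hXk, hXπk⟩ => ⟨k, hXk, h k X hXk hXπk⟩⟩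
  obtain ⟨Y, hYk, hYπk⟩ := exists_point_mem (P := P) (hπ k).symm
  rwa [point_eq_of_mem (hρ k).symm hXk hXρk hYk (h k Y hYk hYπk)]

theorem IsSteiner.left_mem_conicSet (hπ : IsSteiner U V π) : U ∈ conicSet P L U V π := by
  obtain ⟨π', -, -, hππ'⟩ := hπ.isProj.exists_inverse
  obtain ⟨e, hU, hV⟩ := exists_line_mem (L := L) hπ.ne
  refine ⟨π' ⟨e, hV⟩, (π' _).2, ?_⟩
  rwa [hππ']

theorem IsSteiner.right_mem_conicSet (hπ : IsSteiner U V π) : V ∈ conicSet P L U V π :=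
  let ⟨e, hU, hV⟩ := exists_line_mem (L := L) hπ.ne
  ⟨⟨e, hU⟩, hV, (π _).2⟩

end Steiner

section Pole

variable {P L} [ProjectivePlane P L] {U V : P} {π : Pencil L U → Pencil L V}

/-- `O` is the pole of `UV`: the meet of the tangents `π⁻¹(UV)` at `U` and `π(UV)` at `V`. -/
theorem IsSteiner.exists_pole (hπ : IsSteiner U V π) {e : L} (hU : U ∈ e) (hV : V ∈ e) :
    ∃ O : P, O ∉ e ∧ (∀ k : Pencil L U, U ∈ (π k : L) → O ∈ (k : L)) ∧
      ∀ k : Pencil L U, V ∈ (k : L) → O ∈ (π k : L) := by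
  obtain ⟨π', -, hπ'π, hππ'⟩ := hπ.isProj.exists_inverse
  set tU := π' ⟨e, hV⟩
  have htUe : (tU : L) ≠ e := fun h => hπ.apply_ne tU (by rw [hππ', h])
  have hUtV : U ∉ (π ⟨e, hU⟩ : L) := fun h =>
    hπ.apply_ne _ (line_eq_of_mem hπ.ne h (π _).2 hU hV)
  have htt : (tU : L) ≠ π ⟨e, hU⟩ := ne_of_mem_of_not_mem' tU.2 hUtV
  obtain ⟨O, hOtU, hOtV⟩ := exists_point_mem (P := P) htt
  refine ⟨O, fun h => hUtV ?_, fun k hk => ?_, fun k hk => ?_⟩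
  · rwa [point_eq_of_mem htUe hOtU h tU.2 hU] at hOtV
  · rwa [← hπ'π k, show π k = ⟨e, hV⟩ from Subtype.ext (line_eq_of_mem hπ.ne hk (π k).2 hU hV)]
  · rwa [show k = ⟨e, hU⟩ from Subtype.ext (line_eq_of_mem hπ.ne k.2 hk hU hV)]

/-- The map `Y ↦ π⁻¹(VY)·π(k)` from `k` to `π(k)` is a projectivity fixing `k·π(k)`, hence a
perspectivity; its center is the point sought. -/
theorem IsSteiner.exists_center_col (hT : AxiomT P L) (h3 : LinesHaveAtLeast P L 3)
    (hπ : IsSteiner U V π) {k : Pencil L U} (hVk : V ∉ (k : L)) (hUk : U ∉ (π k : L)) :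
    ∃ O : P, ∀ (k' : Pencil L U) (p q : P), p ∈ (k : L) → p ∈ (π k' : L) → q ∈ (k' : L) →
      q ∈ (π k : L) → Col P L O p q := by
  obtain ⟨π', hπ', hπ'π, -⟩ := hπ.isProj.exists_inverse
  obtain ⟨f, hf⟩ := exists_isElemInv hVk
  obtain ⟨g, hg⟩ := exists_isElemMap hUk
  have hψ : IsProj P L (.range (k : L)) (.range (π k : L)) (g ∘ π' ∘ f) :=
    ((IsProj.elemInv hf).comp hπ').comp (.elem hg)
  have hψ_apply (k' : Pencil L U) (p : Pts (k : L)) {q : P} (hp : (p : P) ∈ (π k' : L))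
      (hq : q ∈ (k' : L)) (hq' : q ∈ (π k : L)) : (g (π' (f p)) : P) = q := by
    rw [show f p = π k' from Subtype.ext (hf.apply_eq (π k').2 hp), hπ'π]
    exact hg.apply_eq hq hq'
  obtain ⟨X, hXk, hXπk⟩ := exists_point_mem (P := P) (hπ.apply_ne k).symm
  obtain ⟨O, hO⟩ := hψ.exists_isPersp_of_apply_eq_self hT h3 (hπ.apply_ne k).symm hXk hXπk
    (hψ_apply k ⟨X, hXk⟩ hXπk hXk hXπk)
  exact ⟨O, fun k' p q hp hp' hq hq' => hψ_apply k' ⟨p, hp⟩ hp' hq hq' ▸ hO.2.2 ⟨p, hp⟩⟩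

theorem IsSteiner.col_pole (hT : AxiomT P L) (h3 : LinesHaveAtLeast P L 3)
    (hπ : IsSteiner U V π) {O : P} (hOU : ∀ k : Pencil L U, U ∈ (π k : L) → O ∈ (k : L))
    (hOV : ∀ k : Pencil L U, V ∈ (k : L) → O ∈ (π k : L)) {k k' : Pencil L U} (hVk : V ∉ (k : L))
    (hUk : U ∉ (π k : L)) {p q : P} (hp : p ∈ (k : L)) (hp' : p ∈ (π k' : L))
    (hq : q ∈ (k' : L)) (hq' : q ∈ (π k : L)) : Col P L O p q := by
  obtain ⟨O', hO'⟩ := hπ.exists_center_col hT h3 hVk hUk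
  obtain ⟨π', -, -, hππ'⟩ := hπ.isProj.exists_inverse
  obtain ⟨e, hU, hV⟩ := exists_line_mem (L := L) hπ.ne
  set tU := π' ⟨e, hV⟩
  set tV := π ⟨e, hU⟩
  have hUtU : U ∈ (π tU : L) := by rw [hππ']; exact hU
  obtain ⟨Y, hYk, hYtV⟩ := exists_point_mem (P := P) (ne_of_mem_of_not_mem' tV.2 hVk).symm
  obtain ⟨W, hWtU, hWk⟩ := exists_point_mem (P := P) (ne_of_mem_of_not_mem' tU.2 hUk)
  have hO'tV : O' ∈ (tV : L) := (hO' _ Y V hYk hYtV hV (π k).2).rotate.mem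
    (ne_of_mem_of_not_mem hYk hVk) hYtV tV.2
  have hO'tU : O' ∈ (tU : L) := (hO' tU U W k.2 hUtU hWtU hWk).rotate.mem
    (ne_of_mem_of_not_mem hWk hUk).symm tU.2 hWtU
  have hUtV : U ∉ (tV : L) := fun h => hπ.apply_ne _ (line_eq_of_mem hπ.ne h tV.2 hU hV)
  rw [point_eq_of_mem (ne_of_mem_of_not_mem' tU.2 hUtV) (hOU tU hUtU) (hOV _ hV) hO'tU hO'tV]
  exact hO' k' p q hp hp' hq hq'

end Pole

section BaseChange

variable {P L} [ProjectivePlane P L] {U V : P} {π : Pencil L U → Pencil L V}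

theorem IsSteiner.not_mem_of_mem_cross (hπ : IsSteiner U V π) {X B : P}
    (hX : X ∈ conicSet P L U V π) (hXU : X ≠ U) (hXV : X ≠ V) (hB : B ∈ conicSet P L U V π)
    (hBU : B ≠ U) (hXB : X ≠ B) {k k' : Pencil L U} (hXk : X ∈ (k : L)) (hBk' : B ∈ (k' : L))
    {p q : P} (hpk : p ∈ (k : L)) (hpk' : p ∈ (π k' : L)) (hqk' : q ∈ (k' : L))
    (hqk : q ∈ (π k : L)) {s : L} (hps : p ∈ s) (hqs : q ∈ s) : X ∉ s := by
  intro hXs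
  have hBπk' := mem_apply_of_mem_conicSet hB hBU hBk'
  have hXp : X ≠ p := fun hXp => hXB (hπ.eq_of_mem_conicSet hX hXU
    (hπ.mem_of_mem_conicSet hX hXV (hXp ▸ hpk')) hBk' hBπk')
  have hsk : s = k := line_eq_of_mem hXp hXs hps hXk hpk
  have hkk' : (k : L) ≠ k' := fun h => by
    have hBk : B ∈ (k : L) := h ▸ hBk'
    exact hXB (hπ.eq_of_mem_conicSet hX hXU hXk hBk (mem_apply_of_mem_conicSet hB hBU hBk))
  have hqU : q = U := point_eq_of_mem hkk' (hsk ▸ hqs) hqk' k.2 k'.2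
  exact hπ.apply_ne k (line_eq_of_mem hXU (mem_apply_of_mem_conicSet hX hXU hXk) (hqU ▸ hqk)
    hXk k.2)

/-- The witness is the quadrangle `X B p q` with `q = UB·VX`: its side `pq` passes through the
pole `O` by `IsSteiner.col_pole`. -/
theorem IsSteiner.isHarmonic (hT : AxiomT P L) (h3 : LinesHaveAtLeast P L 3)
    (hπ : IsSteiner U V π) {e : L} (hU : U ∈ e) (hV : V ∈ e) {O : P}
    (hOU : ∀ k : Pencil L U, U ∈ (π k : L) → O ∈ (k : L))
    (hOV : ∀ k : Pencil L U, V ∈ (k : L) → O ∈ (π k : L)) {B X : P}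
    (hB : B ∈ conicSet P L U V π) (hBU : B ≠ U) (hBV : B ≠ V) (hX : X ∈ conicSet P L U V π)
    (hXU : X ≠ U) (hXV : X ≠ V) (hXB : X ≠ B) {k kB : Pencil L U} (hXk : X ∈ (k : L))
    (hBkB : B ∈ (kB : L)) (hOkB : O ∉ (π kB : L)) {p z r : P} (hpk : p ∈ (k : L))
    (hpkB : p ∈ (π kB : L)) (hOpz : Col P L O p z) (hXBr : Col P L X B r) :
    z ≠ U ∧ z ≠ V ∧ IsHarmonic e U V z r := by
  have hXπk := mem_apply_of_mem_conicSet hX hXU hXk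
  have hXe := hπ.not_mem_of_mem_conicSet hX hXU hXV hU hV
  have hBe := hπ.not_mem_of_mem_conicSet hB hBU hBV hU hV
  have hVk : V ∉ (k : L) := fun h => hXe (line_eq_of_mem hπ.ne k.2 h hU hV ▸ hXk)
  have hUπk : U ∉ (π k : L) := fun h => hXe (line_eq_of_mem hπ.ne h (π k).2 hU hV ▸ hXπk)
  obtain ⟨q, hqkB, hqπk⟩ := exists_point_mem (P := P) (ne_of_mem_of_not_mem' kB.2 hUπk)
  have hpnkB : p ∉ (kB : L) := fun h =>
    hπ.not_mem_of_mem_cross hB hBU hBV hX hXU hXB.symm hBkB hXk hqkB hqπk hpk hpkB hqkB h hBkB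
  have hpq : p ≠ q := (ne_of_mem_of_not_mem hqkB hpnkB).symm
  obtain ⟨s, hps, hqs⟩ := exists_line_mem (L := L) hpq
  have hzs : z ∈ s := hOpz.mem (ne_of_mem_of_not_mem hpkB hOkB).symm
    ((hπ.col_pole hT h3 hOU hOV hVk hUπk hpk hpkB hqkB hqπk).rotate.mem hpq hps hqs) hps
  have hBs : B ∉ s :=
    hπ.not_mem_of_mem_cross hB hBU hBV hX hXU hXB.symm hBkB hXk hqkB hqπk hpk hpkB hqs hps
  have hpV : p ≠ V := ne_of_mem_of_not_mem hpk hVk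
  have hπkB : (π kB : L) ≠ e :=
    ne_of_mem_of_not_mem' (mem_apply_of_mem_conicSet hB hBU hBkB) hBe
  refine ⟨fun h => hpnkB ?_, fun h => hBs ?_, X, B, p, q, s, hXe, hBe, hXB,
    hπ.not_mem_of_mem_cross hX hXU hXV hB hBU hXB hXk hBkB hpk hpkB hqkB hqπk hps hqs, hBs,
    ne_of_mem_of_not_mem' hps fun h => hpV (point_eq_of_mem hπkB hpkB h (π kB).2 hV), hps, hqs,
    hzs, ⟨k, hXk, k.2, hpk⟩, ⟨π kB, mem_apply_of_mem_conicSet hB hBU hBkB, hpkB, (π kB).2⟩,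
    ⟨π k, hXπk, (π k).2, hqπk⟩, ⟨kB, hBkB, hqkB, kB.2⟩, hXBr⟩
  · have hskB : s = kB := line_eq_of_mem (ne_of_mem_of_not_mem hqπk hUπk) hqs (h ▸ hzs) hqkB kB.2
    exact hskB ▸ hps
  · have hsm : s = π kB := line_eq_of_mem hpV hps (h ▸ hzs) hpkB (π kB).2
    exact hsm ▸ mem_apply_of_mem_conicSet hB hBU hBkB

/-- `ρ k = B·H(O(k·VB)·UV)`, with `O` the pole of `UV` and `H` the harmonic conjugation on `UV`. -/
theorem IsSteiner.exists_proj_mem (hT : AxiomT P L) (h3 : LinesHaveAtLeast P L 3)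
    (hπ : IsSteiner U V π) {B : P} (hB : B ∈ conicSet P L U V π) (hBU : B ≠ U) (hBV : B ≠ V) :
    ∃ ρ : Pencil L U → Pencil L B, IsProj P L (.pencil U) (.pencil B) ρ ∧
      ∀ (k : Pencil L U) (X : P), X ∈ (k : L) → X ∈ (π k : L) → X ∈ (ρ k : L) := by
  obtain ⟨e, hU, hV⟩ := exists_line_mem (L := L) hπ.ne
  obtain ⟨O, hOe, hOU, hOV⟩ := hπ.exists_pole hU hV
  obtain ⟨l, hUl, hBl⟩ := exists_line_mem (L := L) hBU.symm
  set kB : Pencil L U := ⟨l, hUl⟩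
  have hBπkB : B ∈ (π kB : L) := mem_apply_of_mem_conicSet hB hBU hBl
  have hBe := hπ.not_mem_of_mem_conicSet hB hBU hBV hU hV
  have hUπkB : U ∉ (π kB : L) := fun h =>
    hBe (line_eq_of_mem hπ.ne h (π kB).2 hU hV ▸ hBπkB)
  have hOπkB : O ∉ (π kB : L) := fun h => hBe (hπ.mem_of_mem_conicSet hB hBV
    (line_eq_of_mem (ne_of_mem_of_not_mem hV hOe).symm h (π kB).2 (hOV ⟨e, hU⟩ hV)
      (π ⟨e, hU⟩).2 ▸ hBπkB))
  obtain ⟨f, hf⟩ := exists_isElemMap hUπkB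
  obtain ⟨g, hg⟩ := exists_isPersp hOπkB hOe
  obtain ⟨H, hH, hHU, hHV, hHz⟩ := exists_harmonic_proj h3 hπ.ne hU hV
  obtain ⟨j, hj⟩ := exists_isElemInv hBe
  refine ⟨j ∘ H ∘ g ∘ f, (((IsProj.elem hf).comp hg.isProj).comp hH).comp (.elemInv hj),
    fun k X hXk hXπk => ?_⟩
  have hρ {Y : P} (hY : (H (g (f k)) : P) = Y) : Y ∈ (j (H (g (f k))) : L) := hY ▸ hj.2 _
  by_cases hXB : X = B
  · exact hXB ▸ (j _).2
  by_cases hXV : X = V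
  · subst hXV
    refine hρ ?_
    rw [show f k = ⟨X, (π kB).2⟩ from Subtype.ext (hf.apply_eq hXk (π kB).2),
      hg.apply_eq_self _ hV, hHV]
  by_cases hXU : X = U
  · subst hXU
    refine hρ ?_
    rw [show g (f k) = ⟨X, hU⟩ from Subtype.ext (hg.apply_eq ⟨k, hOU k hXπk, hf.2 k, k.2⟩ hU), hHU]
  obtain ⟨n, hXn, hBn⟩ := exists_line_mem (L := L) hXB
  have hne : n ≠ e :=
    ne_of_mem_of_not_mem' hXn (hπ.not_mem_of_mem_conicSet ⟨k, hXk, hXπk⟩ hXU hXV hU hV)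
  obtain ⟨r, hrn, hre⟩ := exists_point_mem (P := P) hne
  obtain ⟨hzU, hzV, hzr⟩ := hπ.isHarmonic hT h3 hU hV hOU hOV hB hBU hBV ⟨k, hXk, hXπk⟩ hXU hXV
    hXB hXk hBl hOπkB (hf.2 k) (f k).2 (hg.2.2 (f k)) ⟨n, hXn, hBn, hrn⟩
  have hr := hρ (IsHarmonic.unique hT hπ.ne hzU hzV hU hV (g (f k)).2 (H _).2 hre
    (hHz _ _ hzU hzV) hzr)
  exact line_eq_of_mem (ne_of_mem_of_not_mem hre hBe).symm (j _).2 hr hBn hrn ▸ hXn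

end BaseChange

section Conics

variable {P L} [ProjectivePlane P L] {U V : P} {π : Pencil L U → Pencil L V}

theorem IsSteiner.apply_ne_of_forall_mem (hπ : IsSteiner U V π) {B : P}
    (hB : B ∈ conicSet P L U V π) (hBU : B ≠ U) {ρ : Pencil L U → Pencil L B}
    (hρ : Function.Injective ρ)
    (h : ∀ (k : Pencil L U) (X : P), X ∈ (k : L) → X ∈ (π k : L) → X ∈ (ρ k : L))
    (k : Pencil L U) : (ρ k : L) ≠ k := by
  intro hk
  obtain ⟨π', -, -, hππ'⟩ := hπ.isProj.exists_inverse
  obtain ⟨e, hU, hV⟩ := exists_line_mem (L := L) hπ.ne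
  set t := π' ⟨e, hV⟩
  have hUt : U ∈ (π t : L) := by rw [hππ']; exact hU
  have htk : t = k := hρ (Subtype.ext (line_eq_of_mem hBU (ρ t).2 (h t U t.2 hUt) (ρ k).2
    (hk ▸ k.2)))
  have hBt : B ∈ (t : L) := htk ▸ hk ▸ (ρ k).2
  exact hπ.apply_ne t (line_eq_of_mem hBU (mem_apply_of_mem_conicSet hB hBU hBt) hUt hBt t.2)

theorem IsSteiner.exists_replace_right (hT : AxiomT P L) (h3 : LinesHaveAtLeast P L 3)
    (hπ : IsSteiner U V π) {B : P} (hB : B ∈ conicSet P L U V π) (hBU : B ≠ U) :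
    ∃ ρ : Pencil L U → Pencil L B, IsSteiner U B ρ ∧
      conicSet P L U B ρ = conicSet P L U V π := by
  by_cases hBV : B = V
  · subst hBV
    exact ⟨π, hπ, rfl⟩
  obtain ⟨ρ, hρ, hmem⟩ := hπ.exists_proj_mem hT h3 hB hBU hBV
  have hnp := hπ.apply_ne_of_forall_mem hB hBU hρ.injective hmem
  exact ⟨ρ, ⟨hBU.symm, hρ, hnp⟩, conicSet_eq_of_forall_mem hπ.apply_ne hnp hmem⟩

theorem IsSteiner.exists_symm (hπ : IsSteiner U V π) :
    ∃ π' : Pencil L V → Pencil L U, IsSteiner V U π' ∧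
      conicSet P L V U π' = conicSet P L U V π := by
  obtain ⟨π', hπ', hπ'π, hππ'⟩ := hπ.isProj.exists_inverse
  refine ⟨π', ⟨hπ.ne.symm, hπ', fun m h => hπ.apply_ne (π' m) (by rw [hππ', h])⟩, ?_⟩
  ext X
  exact ⟨fun ⟨m, hXm, hXπ'm⟩ => ⟨π' m, hXπ'm, (hππ' m).symm ▸ hXm⟩,
    fun ⟨k, hXk, hXπk⟩ => ⟨π k, hXπk, (hπ'π k).symm ▸ hXk⟩⟩

theorem IsConic.exists_isSteiner (hT : AxiomT P L) (h3 : LinesHaveAtLeast P L 3) {κ : Set P}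
    (hκ : IsConic P L κ) {A B : P} (hA : A ∈ κ) (hB : B ∈ κ) (hAB : A ≠ B) :
    ∃ π : Pencil L A → Pencil L B, IsSteiner A B π ∧ conicSet P L A B π = κ := by
  obtain ⟨U, V, π, hπ, rfl⟩ := isConic_iff.mp hκ
  obtain ⟨W, ρ, hρ, hρπ⟩ : ∃ (W : P) (ρ : Pencil L A → Pencil L W), IsSteiner A W ρ ∧
      conicSet P L A W ρ = conicSet P L U V π := by
    by_cases hAU : A = U
    · subst hAU
      exact ⟨V, π, hπ, rfl⟩
    obtain ⟨σ, hσ, hσπ⟩ := hπ.exists_replace_right hT h3 hA hAU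
    obtain ⟨ρ, hρ, hρσ⟩ := hσ.exists_symm
    exact ⟨U, ρ, hρ, hρσ.trans hσπ⟩
  obtain ⟨τ, hτ, hτρ⟩ := hρ.exists_replace_right hT h3 (hρπ ▸ hB) hAB.symm
  exact ⟨τ, hτ, hτρ.trans hρπ⟩

theorem apply_eq_of_mem_conicSet {A B X : P} {π ρ : Pencil L A → Pencil L B}
    (hπ : X ∈ conicSet P L A B π) (hρ : X ∈ conicSet P L A B ρ) (hXA : X ≠ A) (hXB : X ≠ B)
    {k : Pencil L A} (hk : X ∈ (k : L)) : π k = ρ k :=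
  Subtype.ext (line_eq_of_mem hXB (mem_apply_of_mem_conicSet hπ hXA hk) (π k).2
    (mem_apply_of_mem_conicSet hρ hXA hk) (ρ k).2)

theorem IsSteiner.eq_of_three_mem (hT : AxiomT P L) {A B C D E : P} {π ρ : Pencil L A → Pencil L B}
    (hπ : IsSteiner A B π) (hρ : IsSteiner A B ρ) (hAC : A ≠ C) (hAD : A ≠ D) (hAE : A ≠ E)
    (hBC : B ≠ C) (hBD : B ≠ D) (hBE : B ≠ E) (hACD : ¬ Col P L A C D)
    (hACE : ¬ Col P L A C E) (hADE : ¬ Col P L A D E)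
    (hCπ : C ∈ conicSet P L A B π) (hDπ : D ∈ conicSet P L A B π) (hEπ : E ∈ conicSet P L A B π)
    (hCρ : C ∈ conicSet P L A B ρ) (hDρ : D ∈ conicSet P L A B ρ)
    (hEρ : E ∈ conicSet P L A B ρ) : π = ρ := by
  obtain ⟨c, hAc, hCc⟩ := exists_line_mem (L := L) hAC
  obtain ⟨d, hAd, hDd⟩ := exists_line_mem (L := L) hAD
  obtain ⟨e, hAe, hEe⟩ := exists_line_mem (L := L) hAE
  have hne {x y : L} {X Y : P} (hAx : A ∈ x) (hAy : A ∈ y) (hXx : X ∈ x) (hYy : Y ∈ y)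
      (hAXY : ¬ Col P L A X Y) : (⟨x, hAx⟩ : Pencil L A) ≠ ⟨y, hAy⟩ := fun h =>
    hAXY ⟨x, hAx, hXx, by rw [Subtype.mk.inj h]; exact hYy⟩
  exact hπ.isProj.eq_of_eq_on_three hT hρ.isProj (hne hAc hAd hCc hDd hACD)
    (hne hAc hAe hCc hEe hACE) (hne hAd hAe hDd hEe hADE)
    (apply_eq_of_mem_conicSet hCπ hCρ hAC.symm hBC.symm hCc)
    (apply_eq_of_mem_conicSet hDπ hDρ hAD.symm hBD.symm hDd)
    (apply_eq_of_mem_conicSet hEπ hEρ hAE.symm hBE.symm hEe)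

end Conics

section Composite

variable {P L} [ProjectivePlane P L] {A B O : P} {l m : L} {f : Pencil L A → Pts l}
  {g : Pts l → Pts m} {j : Pts m → Pencil L B}

theorem IsElemInv.mem_conicSet_comp (hj : IsElemInv P L B m j) (hg : IsPersp O l m g)
    (hf : IsElemMap P L A l f) {k : Pencil L A} {X Y Z : P} {n : L} (hXk : X ∈ (k : L))
    (hYk : Y ∈ (k : L)) (hYl : Y ∈ l) (hOYZ : Col P L O Y Z) (hZm : Z ∈ m) (hBn : B ∈ n)
    (hZn : Z ∈ n) (hXn : X ∈ n) : X ∈ conicSet P L A B (j ∘ g ∘ f) := by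
  refine ⟨k, hXk, ?_⟩
  rw [Function.comp_apply, Function.comp_apply,
    show g (f k) = ⟨Z, hZm⟩ from Subtype.ext (hg.apply_eq (hf.apply_eq hYk hYl ▸ hOYZ) hZm),
    hj.apply_eq hBn hZn]
  exact hXn

theorem IsElemInv.comp_isPersp_comp_apply_ne (hj : IsElemInv P L B m j) (hg : IsPersp O l m g)
    (hf : IsElemMap P L A l f) {C : P} (hlm : l ≠ m) (hCl : C ∈ l) (hCm : C ∈ m)
    (hABC : ¬ Col P L A B C) (hABO : ¬ Col P L A B O) (k : Pencil L A) :
    (j (g (f k)) : L) ≠ k := by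
  intro hk
  have hZk : (g (f k) : P) ∈ (k : L) := hk ▸ hj.2 _
  have hBk : B ∈ (k : L) := hk ▸ (j _).2
  by_cases hYZ : (f k : P) = g (f k)
  · exact hABC ⟨k, k.2, hBk, point_eq_of_mem hlm (f k).2 (hYZ ▸ (g (f k)).2) hCl hCm ▸ hf.2 k⟩
  · exact hABO ⟨k, k.2, hBk, (hg.2.2 (f k)).rotate.mem hYZ (hf.2 k) hZk⟩

end Composite

section Existence

variable {P L} [ProjectivePlane P L]

theorem exists_col_not_col {A B C D E : P} (hAE : A ≠ E) (hBD : B ≠ D)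
    (hABD : ¬ Col P L A B D) (hABE : ¬ Col P L A B E) (hACE : ¬ Col P L A C E)
    (hADE : ¬ Col P L A D E) (hBCD : ¬ Col P L B C D) (hBDE : ¬ Col P L B D E) :
    ∃ O : P, Col P L A E O ∧ Col P L B D O ∧ ¬ Col P L C D O ∧ ¬ Col P L C E O ∧
      ¬ Col P L A B O := by
  obtain ⟨a, hAa, hEa⟩ := exists_line_mem (L := L) hAE
  obtain ⟨b, hBb, hDb⟩ := exists_line_mem (L := L) hBD
  obtain ⟨O, hOa, hOb⟩ := exists_point_mem (P := P) fun h : a = b => hABE ⟨a, hAa, h ▸ hBb, hEa⟩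
  refine ⟨O, ⟨a, hAa, hEa, hOa⟩, ⟨b, hBb, hDb, hOb⟩, fun ⟨n, hCn, hDn, hOn⟩ => ?_,
    fun ⟨n, hCn, hEn, hOn⟩ => ?_, fun ⟨n, hAn, hBn, hOn⟩ => ?_⟩
  · have hbn : b ≠ n := fun h => hBCD ⟨n, h ▸ hBb, hCn, hDn⟩
    exact hADE ⟨a, hAa, point_eq_of_mem hbn hOb hOn hDb hDn ▸ hOa, hEa⟩
  · have han : a ≠ n := fun h => hACE ⟨n, h ▸ hAa, hCn, hEn⟩
    exact hBDE ⟨b, hBb, hDb, point_eq_of_mem han hOa hOn hEa hEn ▸ hOb⟩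
  · by_cases hOA : O = A
    · exact hABD ⟨b, hOA ▸ hOb, hBb, hDb⟩
    · exact hABE ⟨a, hAa, line_eq_of_mem hOA hOn hAn hOa hAa ▸ hBn, hEa⟩

theorem exists_isSteiner_mem {A B C D E : P} (hAB : A ≠ B) (hAC : A ≠ C) (hAD : A ≠ D)
    (hAE : A ≠ E) (hBC : B ≠ C) (hBD : B ≠ D) (hBE : B ≠ E) (hCD : C ≠ D) (hCE : C ≠ E)
    (hABC : ¬ Col P L A B C) (hABD : ¬ Col P L A B D) (hABE : ¬ Col P L A B E)
    (hACD : ¬ Col P L A C D) (hACE : ¬ Col P L A C E) (hADE : ¬ Col P L A D E)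
    (hBCD : ¬ Col P L B C D) (hBCE : ¬ Col P L B C E) (hBDE : ¬ Col P L B D E)
    (hCDE : ¬ Col P L C D E) :
    ∃ π : Pencil L A → Pencil L B, IsSteiner A B π ∧ C ∈ conicSet P L A B π ∧
      D ∈ conicSet P L A B π ∧ E ∈ conicSet P L A B π := by
  obtain ⟨O, ⟨a, hAa, hEa, hOa⟩, ⟨b, hBb, hDb, hOb⟩, hCDO, hCEO, hABO⟩ :=
    exists_col_not_col hAE hBD hABD hABE hACE hADE hBCD hBDE
  obtain ⟨l, hCl, hDl⟩ := exists_line_mem (L := L) hCD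
  obtain ⟨m, hCm, hEm⟩ := exists_line_mem (L := L) hCE
  have hAl : A ∉ l := fun h => hACD ⟨l, h, hCl, hDl⟩
  have hBm : B ∉ m := fun h => hBCE ⟨m, h, hCm, hEm⟩
  have hOl : O ∉ l := fun h => hCDO ⟨l, hCl, hDl, h⟩
  obtain ⟨f, hf⟩ := exists_isElemMap hAl
  obtain ⟨g, hg⟩ := exists_isPersp hOl fun h => hCEO ⟨m, hCm, hEm, h⟩
  obtain ⟨j, hj⟩ := exists_isElemInv hBm
  refine ⟨j ∘ g ∘ f, ⟨hAB, ((IsProj.elem hf).comp hg.isProj).comp (.elemInv hj),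
    hj.comp_isPersp_comp_apply_ne hg hf (fun h => hCDE ⟨l, hCl, hDl, h ▸ hEm⟩) hCl hCm hABC
      hABO⟩, ?_, ?_, ?_⟩
  · obtain ⟨k, hAk, hCk⟩ := exists_line_mem (L := L) hAC
    obtain ⟨n, hBn, hCn⟩ := exists_line_mem (L := L) hBC
    exact hj.mem_conicSet_comp hg hf (k := ⟨k, hAk⟩) hCk hCk hCl
      (col_of_ne (ne_of_mem_of_not_mem hCl hOl).symm) hCm hBn hCn hCn
  · obtain ⟨k, hAk, hDk⟩ := exists_line_mem (L := L) hAD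
    obtain ⟨Z, hZb, hZm⟩ := exists_point_mem (P := P) (ne_of_mem_of_not_mem' hBb hBm)
    exact hj.mem_conicSet_comp hg hf (k := ⟨k, hAk⟩) hDk hDk hDl ⟨b, hOb, hDb, hZb⟩ hZm hBb hZb
      hDb
  · obtain ⟨Y, hYa, hYl⟩ := exists_point_mem (P := P) (ne_of_mem_of_not_mem' hAa hAl)
    obtain ⟨n, hBn, hEn⟩ := exists_line_mem (L := L) hBE
    exact hj.mem_conicSet_comp hg hf (k := ⟨a, hAa⟩) hEa hYa hYl ⟨a, hOa, hYa, hEa⟩ hEm hBn hEn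
      hEn

end Existence

theorem five_point_conic
    [Configuration.ProjectivePlane P L]
    (h6 : LinesHaveAtLeast P L 6) (hT : AxiomT P L)
    (A B C D E : P)
    (hAB : A ≠ B) (hAC : A ≠ C) (hAD : A ≠ D) (hAE : A ≠ E)
    (hBC : B ≠ C) (hBD : B ≠ D) (hBE : B ≠ E)
    (hCD : C ≠ D) (hCE : C ≠ E)
    (hABC : ¬ Col P L A B C) (hABD : ¬ Col P L A B D) (hABE : ¬ Col P L A B E)
    (hACD : ¬ Col P L A C D) (hACE : ¬ Col P L A C E) (hADE : ¬ Col P L A D E)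
    (hBCD : ¬ Col P L B C D) (hBCE : ¬ Col P L B C E) (hBDE : ¬ Col P L B D E)
    (hCDE : ¬ Col P L C D E) :
    (∃ κ : Set P, IsConic P L κ ∧ A ∈ κ ∧ B ∈ κ ∧ C ∈ κ ∧ D ∈ κ ∧ E ∈ κ) ∧
    ∀ κ₁ κ₂ : Set P, IsConic P L κ₁ → IsConic P L κ₂ →
      A ∈ κ₁ → B ∈ κ₁ → C ∈ κ₁ → D ∈ κ₁ → E ∈ κ₁ →
      A ∈ κ₂ → B ∈ κ₂ → C ∈ κ₂ → D ∈ κ₂ → E ∈ κ₂ →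
      κ₁ = κ₂ := by
  have h3 : LinesHaveAtLeast P L 3 := h6.mono (by norm_num)
  refine ⟨?_, fun κ₁ κ₂ h₁ h₂ hA₁ hB₁ hC₁ hD₁ hE₁ hA₂ hB₂ hC₂ hD₂ hE₂ => ?_⟩
  · obtain ⟨π, hπ, hC, hD, hE⟩ := exists_isSteiner_mem hAB hAC hAD hAE hBC hBD hBE hCD hCE
      hABC hABD hABE hACD hACE hADE hBCD hBCE hBDE hCDE
    exact ⟨_, isConic_iff.mpr ⟨A, B, π, hπ, rfl⟩, hπ.left_mem_conicSet,
      hπ.right_mem_conicSet, hC, hD, hE⟩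
  · obtain ⟨π₁, hπ₁, rfl⟩ := h₁.exists_isSteiner hT h3 hA₁ hB₁ hAB
    obtain ⟨π₂, hπ₂, rfl⟩ := h₂.exists_isSteiner hT h3 hA₂ hB₂ hAB
    rw [hπ₁.eq_of_three_mem hT hπ₂ hAC hAD hAE hBC hBD hBE hACD hACE hADE hC₁ hD₁ hE₁ hC₂ hD₂ hE₂]
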